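/- arXiv:2408.13801 — 3 statements merged into one kernel-verified Lean document; each statement's English description precedes it below -/
import Mathlib

section
/- Let V be a finite-dimensional complex inner product space and let A₁, …, Aₙ be self-adjoint linear operators on V satisfying the Clifford relations AᵢAⱼ + AⱼAᵢ = 2δᵢⱼ·id_V for all i, j. Then for every ψ ∈ V one has Σᵢ₌₁ⁿ ⟨Aᵢψ, ψ⟩² ≤ ‖ψ‖⁴. -/
/-!
Put `cᵢ = Re ⟨Aᵢψ, ψ⟩` and `B = Σ cᵢ Aᵢ`. By the Clifford relations `B` is self-adjoint with
`B² = S · id`, where `S = Σ cᵢ²`. Hence `Re ⟨Bψ, ψ⟩ = S` and `‖Bψ‖² = S ‖ψ‖²`, and Cauchy–Schwarz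
gives `S² ≤ ‖Bψ‖² ‖ψ‖² = S ‖ψ‖⁴`.
-/

open Finset

theorem sum_smul_mul_self_of_clifford_relations {𝕜 R ι : Type*} [Field 𝕜] [NeZero (2 : 𝕜)]
    [Ring R] [Algebra 𝕜 R] [Fintype ι] [DecidableEq ι] (a : ι → R)
    (ha : ∀ i j, a i * a j + a j * a i = if i = j then (2 : 𝕜) • 1 else 0) (c : ι → 𝕜) :
    (∑ i, c i • a i) * (∑ i, c i • a i) = (∑ i, c i ^ 2) • 1 := by
  have hexpand : (∑ i, c i • a i) * (∑ i, c i • a i) = ∑ i, ∑ j, (c i * c j) • (a i * a j) := by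
    simp only [sum_mul_sum, smul_mul_smul_comm]
  refine smul_right_injective R (two_ne_zero (α := 𝕜)) ?_
  -- Adding the expansion to its transpose produces the anticommutators.
  calc (2 : 𝕜) • ((∑ i, c i • a i) * (∑ i, c i • a i))
      = ∑ i, ∑ j, (c i * c j) • (a i * a j + a j * a i) := by
        rw [two_smul, hexpand]
        nth_rewrite 2 [sum_comm]
        simp only [← sum_add_distrib, smul_add, mul_comm (c _) (c _)]
    _ = (2 : 𝕜) • ((∑ i, c i ^ 2) • 1) := by
        simp only [ha, smul_ite, smul_zero, sum_ite_eq, mem_univ, if_true, smul_smul, sum_smul,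
          smul_sum]
        simp only [sq, mul_comm]

theorem LinearMap.IsSymmetric.re_inner_apply_self_sq_le {𝕜 E : Type*} [RCLike 𝕜]
    [NormedAddCommGroup E] [InnerProductSpace 𝕜 E] {B : E →ₗ[𝕜] E} (hB : B.IsSymmetric)
    {s : ℝ} (hBB : B * B = (s : 𝕜) • 1) (x : E) :
    RCLike.re (inner 𝕜 (B x) x) ^ 2 ≤ s * ‖x‖ ^ 4 := by
  have hnorm : ‖B x‖ ^ 2 = s * ‖x‖ ^ 2 := by
    rw [← inner_self_eq_norm_sq (𝕜 := 𝕜), hB, ← Module.End.mul_apply, hBB]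
    simp [inner_smul_right]
  calc RCLike.re (inner 𝕜 (B x) x) ^ 2 ≤ (‖B x‖ * ‖x‖) ^ 2 := by
        rw [← sq_abs]
        gcongr
        exact (RCLike.abs_re_le_norm _).trans (norm_inner_le_norm _ _)
    _ = s * ‖x‖ ^ 4 := by rw [mul_pow, hnorm]; ring

theorem stmt_2_general {V : Type*} [NormedAddCommGroup V] [InnerProductSpace ℂ V]
    {n : ℕ}
    (A : Fin n → (V →ₗ[ℂ] V))
    (hsym : ∀ i, (A i).IsSymmetric)
    (hcliff : ∀ i j, A i ∘ₗ A j + A j ∘ₗ A i =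
      if i = j then (2 : ℂ) • LinearMap.id else 0)
    (ψ : V) :
    ∑ i, ((inner ℂ (A i ψ) ψ : ℂ)).re ^ 2 ≤ ‖ψ‖ ^ 4 := by
  set c : Fin n → ℝ := fun i => (inner ℂ (A i ψ) ψ).re
  set B : V →ₗ[ℂ] V := ∑ i, (c i : ℂ) • A i
  have hB : B.IsSymmetric :=
    LinearMap.isSymmetric_sum _ fun i _ => (hsym i).smul (Complex.conj_ofReal _)
  have hBB : B * B = ((∑ i, c i ^ 2 : ℝ) : ℂ) • 1 := by
    push_cast
    exact sum_smul_mul_self_of_clifford_relations A hcliff _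
  have hBψ : (inner ℂ (B ψ) ψ).re = ∑ i, c i ^ 2 := by
    simp [B, c, sq]
  have hsq := hB.re_inner_apply_self_sq_le hBB ψ
  rw [RCLike.re_to_complex, hBψ, sq] at hsq
  obtain hS | hS := (sum_nonneg fun i _ => sq_nonneg (c i)).eq_or_lt
  · rw [← hS]
    positivity
  · exact le_of_mul_le_mul_left hsq hS

/-- For self-adjoint operators `A₁, …, Aₙ` on a finite-dimensional complex inner product
space satisfying the Clifford relations `AᵢAⱼ + AⱼAᵢ = 2δᵢⱼ·id`, every `ψ` satisfies
`Σᵢ ⟨Aᵢψ, ψ⟩² ≤ ‖ψ‖⁴`. -/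
theorem stmt_2 {V : Type*} [NormedAddCommGroup V] [InnerProductSpace ℂ V]
    [FiniteDimensional ℂ V] {n : ℕ}
    (A : Fin n → (V →ₗ[ℂ] V))
    (hsym : ∀ i, (A i).IsSymmetric)
    (hcliff : ∀ i j, A i ∘ₗ A j + A j ∘ₗ A i =
      if i = j then (2 : ℂ) • LinearMap.id else 0)
    (ψ : V) :
    ∑ i, ((inner ℂ (A i ψ) ψ : ℂ)).re ^ 2 ≤ ‖ψ‖ ^ 4 :=
  stmt_2_general A hsym hcliff ψ
end

section
/- Let V be a finite-dimensional complex inner product space, let A₁, …, Aₙ be self-adjoint linear operators on V satisfying the Clifford relations AᵢAⱼ + AⱼAᵢ = 2δᵢⱼ·id_V, and let ψ ∈ V be nonzero. Set f = ‖ψ‖² and Wᵢ = ⟨Aᵢψ, ψ⟩ for i = 1, …, n. If Σᵢ₌₁ⁿ Wᵢ² = f², then (Σᵢ₌₁ⁿ Wᵢ Aᵢ) ψ = f ψ. -/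
/-! With `T = Σ Wᵢ Aᵢ`, the Clifford relations give `T² = (Σ Wᵢ²) id = f² id`, and
`Re ⟨Tψ, ψ⟩ = Σ Wᵢ² = f ‖ψ‖²`. For symmetric `T` these two facts force
`‖Tψ - fψ‖² = ‖Tψ‖² - 2f Re ⟨Tψ, ψ⟩ + f² ‖ψ‖² = 0`. -/

open Finset RCLike
open scoped InnerProductSpace

theorem sum_smul_mul_self_of_anticommute {𝕜 𝓐 ι : Type*} [Field 𝕜] [CharZero 𝕜] [Ring 𝓐]
    [Algebra 𝕜 𝓐] [Fintype ι] [DecidableEq ι] (e : ι → 𝓐)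
    (he : ∀ i j, e i * e j + e j * e i = if i = j then 2 else 0) (c : ι → 𝕜) :
    (∑ i, c i • e i) * (∑ i, c i • e i) = algebraMap 𝕜 𝓐 (∑ i, c i ^ 2) := by
  have hswap : ∑ i, ∑ j, (c i * c j) • (e i * e j) = ∑ i, ∑ j, (c i * c j) • (e j * e i) := by
    rw [Finset.sum_comm]
    exact sum_congr rfl fun i _ => sum_congr rfl fun j _ => by rw [mul_comm]
  refine smul_right_injective 𝓐 (two_ne_zero (α := 𝕜)) ?_
  calc (2 : 𝕜) • ((∑ i, c i • e i) * (∑ i, c i • e i))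
      = ∑ i, ∑ j, (c i * c j) • (e i * e j + e j * e i) := by
        rw [sum_mul_sum, two_smul]
        simp only [smul_mul_smul_comm]
        nth_rw 2 [hswap]
        simp only [smul_add, sum_add_distrib]
    _ = (2 : 𝕜) • algebraMap 𝕜 𝓐 (∑ i, c i ^ 2) := by
        simp only [he, smul_ite, smul_zero, sum_ite_eq, mem_univ, if_true, map_sum,
          Algebra.algebraMap_eq_smul_one, smul_sum, smul_smul, sq]
        exact sum_congr rfl fun i _ => by
          rw [mul_comm (2 : 𝕜), mul_smul (c i * c i), two_smul, one_add_one_eq_two]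

theorem LinearMap.IsSymmetric.apply_eq_smul_of_apply_apply_eq {𝕜 E : Type*} [RCLike 𝕜]
    [NormedAddCommGroup E] [InnerProductSpace 𝕜 E] {T : E →ₗ[𝕜] E} (hT : T.IsSymmetric)
    {x : E} {a : ℝ} (hsq : T (T x) = (a : 𝕜) ^ 2 • x) (hre : re ⟪T x, x⟫_𝕜 = a * ‖x‖ ^ 2) :
    T x = (a : 𝕜) • x := by
  have hTx : ‖T x‖ ^ 2 = a ^ 2 * ‖x‖ ^ 2 := by
    rw [← inner_self_eq_norm_sq (𝕜 := 𝕜), ← hT, hsq, inner_smul_left, ← ofReal_pow,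
      conj_ofReal, re_ofReal_mul, inner_self_eq_norm_sq]
  rw [← sub_eq_zero, ← norm_eq_zero, ← sq_eq_zero_iff, norm_sub_sq (𝕜 := 𝕜), hTx,
    inner_smul_right, norm_smul, re_ofReal_mul, hre, norm_ofReal, mul_pow, sq_abs]
  ring

theorem stmt_4_general {V : Type*} [NormedAddCommGroup V] [InnerProductSpace ℂ V]
    {n : ℕ}
    (A : Fin n → (V →ₗ[ℂ] V))
    (hsym : ∀ i, (A i).IsSymmetric)
    (hcliff : ∀ i j, A i ∘ₗ A j + A j ∘ₗ A i =
      if i = j then (2 : ℂ) • LinearMap.id else 0)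
    (ψ : V)
    (f : ℝ) (hf : f = ‖ψ‖ ^ 2)
    (W : Fin n → ℝ) (hW : ∀ i, W i = ((inner ℂ (A i ψ) ψ : ℂ)).re)
    (hnorm : ∑ i, W i ^ 2 = f ^ 2) :
    (∑ i, (W i : ℂ) • A i) ψ = (f : ℂ) • ψ := by
  set T : V →ₗ[ℂ] V := ∑ i, (W i : ℂ) • A i
  have hT : T.IsSymmetric :=
    LinearMap.isSymmetric_sum _ fun i _ => (hsym i).smul (Complex.conj_ofReal _)
  have hanti : ∀ i j, A i * A j + A j * A i = if i = j then 2 else 0 := fun i j => by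
    rw [Module.End.mul_eq_comp, Module.End.mul_eq_comp, hcliff, two_smul,
      ← Module.End.one_eq_id, one_add_one_eq_two]
  have hsq : T (T ψ) = (f : ℂ) ^ 2 • ψ := by
    rw [← Module.End.mul_apply, sum_smul_mul_self_of_anticommute A hanti,
      Module.algebraMap_end_apply]
    congr 1
    exact_mod_cast hnorm
  have hre : re ⟪T ψ, ψ⟫_ℂ = f * ‖ψ‖ ^ 2 :=
    calc re ⟪T ψ, ψ⟫_ℂ = ∑ i, W i ^ 2 := by
          simp only [T, LinearMap.sum_apply, LinearMap.smul_apply, sum_inner, inner_smul_left,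
            Complex.conj_ofReal, map_sum, re_to_complex, Complex.re_ofReal_mul, ← hW, sq]
      _ = f * ‖ψ‖ ^ 2 := by rw [hnorm, hf, sq]
  exact hT.apply_eq_smul_of_apply_apply_eq hsq hre

/-- For self-adjoint operators `A₁, …, Aₙ` on a finite-dimensional complex inner product
space satisfying the Clifford relations, and a nonzero `ψ` with `f = ‖ψ‖²`,
`Wᵢ = ⟨Aᵢψ, ψ⟩`: if `Σᵢ Wᵢ² = f²`, then `(Σᵢ Wᵢ Aᵢ) ψ = f ψ`. -/
theorem stmt_4 {V : Type*} [NormedAddCommGroup V] [InnerProductSpace ℂ V]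
    [FiniteDimensional ℂ V] {n : ℕ}
    (A : Fin n → (V →ₗ[ℂ] V))
    (hsym : ∀ i, (A i).IsSymmetric)
    (hcliff : ∀ i j, A i ∘ₗ A j + A j ∘ₗ A i =
      if i = j then (2 : ℂ) • LinearMap.id else 0)
    (ψ : V) (hψ : ψ ≠ 0)
    (f : ℝ) (hf : f = ‖ψ‖ ^ 2)
    (W : Fin n → ℝ) (hW : ∀ i, W i = ((inner ℂ (A i ψ) ψ : ℂ)).re)
    (hnorm : ∑ i, W i ^ 2 = f ^ 2) :
    (∑ i, (W i : ℂ) • A i) ψ = (f : ℂ) • ψ :=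
  stmt_4_general A hsym hcliff ψ f hf W hW hnorm
end

section
/- Let Ω ⊆ ℝⁿ be a connected open set, let q : Ω → Mₙ(ℝ) be a continuous real matrix-valued function, and let z : Ω → ℂ and Z = (Z₁, …, Zₙ) : Ω → ℂⁿ be differentiable functions satisfying ∂ᵢ z(x) = Σⱼ qᵢⱼ(x) Zⱼ(x) and ∂ᵢ Zⱼ(x) = qᵢⱼ(x) z(x) for all x ∈ Ω and all indices i, j. Then the real-valued function |z|² − Σⱼ |Zⱼ|² is constant on Ω. In particular, if in addition z and Z both vanish at some point x₀ ∈ Ω and q is bounded on Ω, then z ≡ 0 and Z ≡ 0 on Ω. -/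
/-!
Write `w = (z, Z)`. The system reads `∂ᵢ w = Qᵢ w` with `Qᵢ (ζ, Ζ) = (Σⱼ qᵢⱼ Ζⱼ, (qᵢⱼ ζ)ⱼ)`,
and each `Qᵢ` is skew for the real bilinear form `B(w, w') = Re(ζ̄ ζ') − Σⱼ Re(Ζ̄ⱼ Ζ'ⱼ)`;
hence `∂ᵢ B(w, w) = 2 B(w, Qᵢ w) = 0` and `|z|² − |Z|²` is locally constant. If `q` is
bounded, then `‖dw‖ ≤ K ‖w‖`, so by Grönwall's inequality along segments `w` vanishes on every
ball in `Ω` meeting its zero set. That zero set is therefore open and relatively closed in the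
connected set `Ω`.
-/

open Set Metric

section NormFDerivBound

variable {E F : Type*} [NormedAddCommGroup E] [NormedSpace ℝ E]
  [NormedAddCommGroup F] [NormedSpace ℝ F] {f : E → F} {K : ℝ}

theorem Convex.eqOn_zero_of_norm_fderiv_le {s : Set E} (hs : Convex ℝ s)
    (hf : ∀ x ∈ s, DifferentiableAt ℝ f x) (hK : ∀ x ∈ s, ‖fderiv ℝ f x‖ ≤ K * ‖f x‖)
    {a : E} (ha : a ∈ s) (h0 : f a = 0) : EqOn f 0 s := by
  intro x hx
  set γ := AffineMap.lineMap (k := ℝ) a x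
  have hγ : ∀ t ∈ Icc (0 : ℝ) 1, γ t ∈ s := fun t ht => hs.lineMap_mem ha hx ht
  have hderiv : ∀ t ∈ Icc (0 : ℝ) 1, HasDerivAt (f ∘ γ) (fderiv ℝ f (γ t) (x - a)) t :=
    fun t ht => (hf _ (hγ t ht)).hasFDerivAt.comp_hasDerivAt t AffineMap.hasDerivAt_lineMap
  have hbound : ∀ t ∈ Ico (0 : ℝ) 1,
      ‖fderiv ℝ f (γ t) (x - a)‖ ≤ K * ‖x - a‖ * ‖(f ∘ γ) t‖ := fun t ht =>
    calc ‖fderiv ℝ f (γ t) (x - a)‖ ≤ ‖fderiv ℝ f (γ t)‖ * ‖x - a‖ :=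
          ContinuousLinearMap.le_opNorm _ _
      _ ≤ K * ‖f (γ t)‖ * ‖x - a‖ := by gcongr; exact hK _ (hγ t (Ico_subset_Icc_self ht))
      _ = K * ‖x - a‖ * ‖(f ∘ γ) t‖ := mul_right_comm _ _ _
  have hvanish := eq_zero_of_abs_deriv_le_mul_abs_self_of_eq_zero_right
    (fun t ht => (hderiv t ht).continuousAt.continuousWithinAt)
    (fun t ht => (hderiv t (Ico_subset_Icc_self ht)).hasDerivWithinAt)
    (by simpa [γ] using h0) hbound 1 (right_mem_Icc.2 zero_le_one)
  simpa [γ] using hvanish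

theorem IsOpen.eqOn_zero_of_norm_fderiv_le {U : Set E} (hU : IsOpen U)
    (hU' : IsPreconnected U) (hf : ∀ x ∈ U, DifferentiableAt ℝ f x)
    (hK : ∀ x ∈ U, ‖fderiv ℝ f x‖ ≤ K * ‖f x‖) {a : E} (ha : a ∈ U) (h0 : f a = 0) :
    EqOn f 0 U := by
  have ball_of_zero : ∀ b ε c, ball b ε ⊆ U → c ∈ ball b ε → f c = 0 → EqOn f 0 (ball b ε) :=
    fun b ε c hsub hc hfc => (convex_ball b ε).eqOn_zero_of_norm_fderiv_le
      (fun x hx => hf x (hsub hx)) (fun x hx => hK x (hsub hx)) hc hfc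
  let u := {x ∈ U | f x = 0}
  have hu : IsOpen u := isOpen_iff.2 fun b ⟨hbU, hb⟩ => by
    obtain ⟨ε, hε, hsub⟩ := isOpen_iff.1 hU b hbU
    exact ⟨ε, hε, fun x hx => ⟨hsub hx, ball_of_zero b ε b hsub (mem_ball_self hε) hb hx⟩⟩
  have hclosed : closure u ∩ U ⊆ u := fun p ⟨hpu, hpU⟩ => by
    obtain ⟨ε, hε, hsub⟩ := isOpen_iff.1 hU p hpU
    obtain ⟨c, ⟨-, hc⟩, hpc⟩ := mem_closure_iff.1 hpu ε hε
    exact ⟨hpU, ball_of_zero p ε c hsub (mem_ball'.2 hpc) hc (mem_ball_self hε)⟩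
  exact fun x hx => (hU'.subset_of_closure_inter_subset hu ⟨a, ha, ha, h0⟩ hclosed hx).2

end NormFDerivBound

theorem EuclideanSpace.opNorm_le_of_norm_apply_single_le {ι F : Type*} [Fintype ι]
    [DecidableEq ι] [NormedAddCommGroup F] [NormedSpace ℝ F]
    {L : EuclideanSpace ℝ ι →L[ℝ] F} {M : ℝ} (hM : 0 ≤ M)
    (h : ∀ i, ‖L (EuclideanSpace.single i 1)‖ ≤ M) : ‖L‖ ≤ Fintype.card ι * M := by
  refine L.opNorm_le_bound (by positivity) fun v => ?_
  calc ‖L v‖ = ‖∑ i, v i • L (EuclideanSpace.single i 1)‖ := by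
        conv_lhs => rw [← (EuclideanSpace.basisFun ι ℝ).sum_repr v]
        simp [EuclideanSpace.basisFun_apply]
    _ ≤ ∑ i, ‖v‖ * M := norm_sum_le_of_le _ fun i _ => by
        rw [norm_smul]
        exact mul_le_mul (PiLp.norm_apply_le v i) (h i) (norm_nonneg _) (norm_nonneg _)
    _ = Fintype.card ι * M * ‖v‖ := by
        rw [Finset.sum_const, Finset.card_univ, nsmul_eq_mul]; ring

section TwistedSystem

variable {n : ℕ} {z : EuclideanSpace ℝ (Fin n) → ℂ} {Z : EuclideanSpace ℝ (Fin n) → Fin n → ℂ}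
  {x : EuclideanSpace ℝ (Fin n)} {A : Matrix (Fin n) (Fin n) ℝ}

theorem hasFDerivAt_norm_sq_sub_sum_norm_sq_zero (hz : DifferentiableAt ℝ z x)
    (hZ : ∀ j, DifferentiableAt ℝ (fun y => Z y j) x)
    (hdz : ∀ i, fderiv ℝ z x (EuclideanSpace.single i 1) = ∑ j, (A i j : ℂ) * Z x j)
    (hdZ : ∀ i j, fderiv ℝ (fun y => Z y j) x (EuclideanSpace.single i 1) = (A i j : ℂ) * z x) :
    HasFDerivAt (fun y => ‖z y‖ ^ 2 - ∑ j, ‖Z y j‖ ^ 2)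
      (0 : EuclideanSpace ℝ (Fin n) →L[ℝ] ℝ) x := by
  have hderiv : HasFDerivAt (fun y => ‖z y‖ ^ 2 - ∑ j, ‖Z y j‖ ^ 2) _ x :=
    hz.hasFDerivAt.norm_sq.sub
      (HasFDerivAt.fun_sum (u := Finset.univ) fun j _ => (hZ j).hasFDerivAt.norm_sq)
  refine hderiv.congr_fderiv (norm_le_zero_iff.1 ?_)
  refine (EuclideanSpace.opNorm_le_of_norm_apply_single_le le_rfl fun i => ?_).trans_eq
    (mul_zero _)
  simp only [sub_apply, sum_apply, smul_apply, ContinuousLinearMap.comp_apply,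
    innerSL_apply_apply, hdz, hdZ, ← Complex.real_smul, inner_sum, real_inner_smul_right,
    real_inner_comm (z x)]
  rw [Finset.smul_sum, sub_self, norm_zero]

theorem norm_fderiv_prodMk_le {C : ℝ} (hC : 0 ≤ C) (hA : ∀ i j, |A i j| ≤ C)
    (hz : DifferentiableAt ℝ z x) (hZ : ∀ j, DifferentiableAt ℝ (fun y => Z y j) x)
    (hdz : ∀ i, fderiv ℝ z x (EuclideanSpace.single i 1) = ∑ j, (A i j : ℂ) * Z x j)
    (hdZ : ∀ i j, fderiv ℝ (fun y => Z y j) x (EuclideanSpace.single i 1) = (A i j : ℂ) * z x) :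
    ‖fderiv ℝ (fun y => (z y, Z y)) x‖ ≤ n * ((n + 1) * C) * ‖(z x, Z x)‖ := by
  have hderiv := hz.hasFDerivAt.prodMk (hasFDerivAt_pi.2 fun j => (hZ j).hasFDerivAt)
  rw [hderiv.fderiv]
  refine (EuclideanSpace.opNorm_le_of_norm_apply_single_le
    (M := (n + 1) * C * ‖(z x, Z x)‖) (by positivity) fun i => ?_).trans_eq
    (by rw [Fintype.card_fin]; ring)
  have hzM : ‖z x‖ ≤ ‖(z x, Z x)‖ := norm_fst_le (z x, Z x)
  have hZM : ∀ j, ‖Z x j‖ ≤ ‖(z x, Z x)‖ := fun j =>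
    (norm_le_pi_norm (Z x) j).trans (norm_snd_le (z x, Z x))
  have hCM : 0 ≤ C * ‖(z x, Z x)‖ := by positivity
  simp only [ContinuousLinearMap.prod_apply, hdz]
  refine norm_prod_le_iff.2 ⟨?_, (pi_norm_le_iff_of_nonneg (by positivity)).2 fun j => ?_⟩
  · calc ‖∑ j, (A i j : ℂ) * Z x j‖ ≤ ∑ j : Fin n, C * ‖(z x, Z x)‖ :=
          norm_sum_le_of_le _ fun j _ => by
            rw [norm_mul, Complex.norm_real, Real.norm_eq_abs]
            exact mul_le_mul (hA i j) (hZM j) (norm_nonneg _) hC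
      _ ≤ (n + 1) * C * ‖(z x, Z x)‖ := by
          rw [Finset.sum_const, Finset.card_univ, Fintype.card_fin, nsmul_eq_mul]; nlinarith
  · simp only [ContinuousLinearMap.pi_apply, hdZ]
    calc ‖(A i j : ℂ) * z x‖ ≤ C * ‖(z x, Z x)‖ := by
          rw [norm_mul, Complex.norm_real, Real.norm_eq_abs]
          exact mul_le_mul (hA i j) hzM (norm_nonneg _) hC
      _ ≤ (n + 1) * C * ‖(z x, Z x)‖ := by nlinarith

end TwistedSystem

theorem stmt_8_general {n : ℕ} (Ω : Set (EuclideanSpace ℝ (Fin n)))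
    (hopen : IsOpen Ω) (hconn : IsConnected Ω)
    (q : EuclideanSpace ℝ (Fin n) → Matrix (Fin n) (Fin n) ℝ)
    (z : EuclideanSpace ℝ (Fin n) → ℂ)
    (Z : EuclideanSpace ℝ (Fin n) → Fin n → ℂ)
    (hz : ∀ x ∈ Ω, DifferentiableAt ℝ z x)
    (hZ : ∀ x ∈ Ω, ∀ j, DifferentiableAt ℝ (fun y => Z y j) x)
    (hdz : ∀ x ∈ Ω, ∀ i, fderiv ℝ z x (EuclideanSpace.single i 1) =
      ∑ j, (q x i j : ℂ) * Z x j)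
    (hdZ : ∀ x ∈ Ω, ∀ i j,
      fderiv ℝ (fun y => Z y j) x (EuclideanSpace.single i 1) = (q x i j : ℂ) * z x) :
    (∀ x ∈ Ω, ∀ y ∈ Ω,
      ‖z x‖ ^ 2 - ∑ j, ‖Z x j‖ ^ 2 = ‖z y‖ ^ 2 - ∑ j, ‖Z y j‖ ^ 2) ∧
    (∀ x₀ ∈ Ω, z x₀ = 0 → (∀ j, Z x₀ j = 0) →
      (∃ C : ℝ, ∀ x ∈ Ω, ∀ i j, |q x i j| ≤ C) →
      ∀ x ∈ Ω, z x = 0 ∧ ∀ j, Z x j = 0) := by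
  constructor
  · intro x hx y hy
    have hconserved := fun w hw =>
      hasFDerivAt_norm_sq_sub_sum_norm_sq_zero (hz w hw) (hZ w hw) (hdz w hw) (hdZ w hw)
    exact hopen.is_const_of_fderiv_eq_zero hconn.isPreconnected
      (fun w hw => (hconserved w hw).differentiableAt.differentiableWithinAt)
      (fun w hw => (hconserved w hw).fderiv) hx hy
  · rintro x₀ hx₀ hz₀ hZ₀ ⟨C, hC⟩ x hx
    have hvanish := hopen.eqOn_zero_of_norm_fderiv_le hconn.isPreconnected
      (f := fun y => (z y, Z y))
      (fun w hw => (hz w hw).prodMk (differentiableAt_pi.2 (hZ w hw)))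
      (fun w hw => norm_fderiv_prodMk_le (le_max_right C 0)
        (fun i j => (hC w hw i j).trans (le_max_left C 0))
        (hz w hw) (hZ w hw) (hdz w hw) (hdZ w hw))
      hx₀ (Prod.ext hz₀ (funext hZ₀)) hx
    simpa [funext_iff] using hvanish

/-- If on a connected open set `Ω ⊆ ℝⁿ` the differentiable functions `z : Ω → ℂ` and
`Z : Ω → ℂⁿ` satisfy `∂ᵢ z = Σⱼ qᵢⱼ Zⱼ` and `∂ᵢ Zⱼ = qᵢⱼ z` for a continuous real
matrix-valued `q`, then `|z|² − Σⱼ |Zⱼ|²` is constant on `Ω`; and if moreover `z`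
and `Z` vanish at some point of `Ω` and `q` is bounded on `Ω`, then `z ≡ 0` and
`Z ≡ 0` on `Ω`. -/
theorem stmt_8 {n : ℕ} (Ω : Set (EuclideanSpace ℝ (Fin n)))
    (hopen : IsOpen Ω) (hconn : IsConnected Ω)
    (q : EuclideanSpace ℝ (Fin n) → Matrix (Fin n) (Fin n) ℝ)
    (hq : ∀ i j, ContinuousOn (fun x => q x i j) Ω)
    (z : EuclideanSpace ℝ (Fin n) → ℂ)
    (Z : EuclideanSpace ℝ (Fin n) → Fin n → ℂ)
    (hz : ∀ x ∈ Ω, DifferentiableAt ℝ z x)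
    (hZ : ∀ x ∈ Ω, ∀ j, DifferentiableAt ℝ (fun y => Z y j) x)
    (hdz : ∀ x ∈ Ω, ∀ i, fderiv ℝ z x (EuclideanSpace.single i 1) =
      ∑ j, (q x i j : ℂ) * Z x j)
    (hdZ : ∀ x ∈ Ω, ∀ i j,
      fderiv ℝ (fun y => Z y j) x (EuclideanSpace.single i 1) = (q x i j : ℂ) * z x) :
    (∀ x ∈ Ω, ∀ y ∈ Ω,
      ‖z x‖ ^ 2 - ∑ j, ‖Z x j‖ ^ 2 = ‖z y‖ ^ 2 - ∑ j, ‖Z y j‖ ^ 2) ∧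
    (∀ x₀ ∈ Ω, z x₀ = 0 → (∀ j, Z x₀ j = 0) →
      (∃ C : ℝ, ∀ x ∈ Ω, ∀ i j, |q x i j| ≤ C) →
      ∀ x ∈ Ω, z x = 0 ∧ ∀ j, Z x j = 0) :=
  stmt_8_general Ω hopen hconn q z Z hz hZ hdz hdZ
end
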